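/- The group defined by the presentation ⟨a, b, c, d | ab = ba, ac = da, bc = db⟩ is isomorphic to the group defined by the presentation ⟨a, c, e | ae = ea, ce = ec⟩. -/
import Mathlib


namespace Stmt4

/-- Generators a, b, c, d of the first presentation. -/
def a : FreeGroup (Fin 4) := FreeGroup.of 0
def b : FreeGroup (Fin 4) := FreeGroup.of 1
def c : FreeGroup (Fin 4) := FreeGroup.of 2
def d : FreeGroup (Fin 4) := FreeGroup.of 3

/-- Relators of ⟨a, b, c, d | ab = ba, ac = da, bc = db⟩. -/
def rels₁ : Set (FreeGroup (Fin 4)) :=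
  {a * b * (b * a)⁻¹, a * c * (d * a)⁻¹, b * c * (d * b)⁻¹}

/-- Generators a, c, e of the second presentation. -/
def a' : FreeGroup (Fin 3) := FreeGroup.of 0
def c' : FreeGroup (Fin 3) := FreeGroup.of 1
def e' : FreeGroup (Fin 3) := FreeGroup.of 2

/-- Relators of ⟨a, c, e | ae = ea, ce = ec⟩. -/
def rels₂ : Set (FreeGroup (Fin 3)) :=
  {a' * e' * (e' * a')⁻¹, c' * e' * (e' * c')⁻¹}

noncomputable abbrev P (i : Fin 4) : PresentedGroup rels₁ := PresentedGroup.of i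
noncomputable abbrev Q (i : Fin 3) : PresentedGroup rels₂ := PresentedGroup.of i

lemma rel_one {α : Type*} {rels : Set (FreeGroup α)} {r : FreeGroup α} (hr : r ∈ rels) :
    (QuotientGroup.mk' (Subgroup.normalClosure rels) r : PresentedGroup rels) = 1 := by
  rw [QuotientGroup.mk'_apply, QuotientGroup.eq_one_iff]
  exact Subgroup.subset_normalClosure hr

lemma mk_of {α : Type*} {rels : Set (FreeGroup α)} (x : α) :
    (QuotientGroup.mk' (Subgroup.normalClosure rels) (FreeGroup.of x)) =
      (PresentedGroup.of x : PresentedGroup rels) := rfl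

lemma comm_ae : Q 0 * Q 2 = Q 2 * Q 0 := by
  have h := rel_one (rels := rels₂) (r := a' * e' * (e' * a')⁻¹) (by left; rfl)
  simp only [a', e', map_mul, map_inv, mk_of] at h
  rwa [mul_inv_eq_one] at h

lemma comm_ce : Q 1 * Q 2 = Q 2 * Q 1 := by
  have h := rel_one (rels := rels₂) (r := c' * e' * (e' * c')⁻¹) (by right; rfl)
  simp only [c', e', map_mul, map_inv, mk_of] at h
  rwa [mul_inv_eq_one] at h

lemma rel_ab : P 0 * P 1 = P 1 * P 0 := by
  have h := rel_one (rels := rels₁) (r := a * b * (b * a)⁻¹) (by left; rfl)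
  simp only [a, b, map_mul, map_inv, mk_of] at h
  rwa [mul_inv_eq_one] at h

lemma rel_ac : P 0 * P 2 = P 3 * P 0 := by
  have h := rel_one (rels := rels₁) (r := a * c * (d * a)⁻¹) (by right; left; rfl)
  simp only [a, c, d, map_mul, map_inv, mk_of] at h
  rwa [mul_inv_eq_one] at h

lemma rel_bc : P 1 * P 2 = P 3 * P 1 := by
  have h := rel_one (rels := rels₁) (r := b * c * (d * b)⁻¹) (by right; right; rfl)
  simp only [b, c, d, map_mul, map_inv, mk_of] at h
  rwa [mul_inv_eq_one] at h

noncomputable def φf : Fin 4 → PresentedGroup rels₂ :=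
  ![Q 0, Q 0 * Q 2, Q 1, Q 0 * Q 1 * (Q 0)⁻¹]

noncomputable def ψf : Fin 3 → PresentedGroup rels₁ :=
  ![P 0, P 2, (P 0)⁻¹ * P 1]

lemma hφ : ∀ r ∈ rels₁, FreeGroup.lift φf r = 1 := by
  intro r hr
  rcases hr with h | h | h <;> subst h <;>
    simp only [a, b, c, d, map_mul, map_inv, FreeGroup.lift_apply_of, φf,
      Matrix.cons_val_zero, Matrix.cons_val_one, Matrix.head_cons,
      Matrix.cons_val_two, Matrix.tail_cons, Matrix.cons_val_three,
      Matrix.head_fin_const] <;>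
    rw [mul_inv_eq_one]
  · calc Q 0 * (Q 0 * Q 2) = Q 0 * (Q 2 * Q 0) := by rw [comm_ae]
      _ = Q 0 * Q 2 * Q 0 := by group
  · group
  · calc Q 0 * Q 2 * Q 1
        = Q 0 * (Q 1 * Q 2) := by rw [mul_assoc, ← comm_ce]
      _ = (Q 0 * Q 1 * (Q 0)⁻¹) * (Q 0 * Q 2) := by group

lemma hψ : ∀ r ∈ rels₂, FreeGroup.lift ψf r = 1 := by
  intro r hr
  rcases hr with h | h <;> subst h <;>
    simp only [a', c', e', map_mul, map_inv, FreeGroup.lift_apply_of, ψf,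
      Matrix.cons_val_zero, Matrix.cons_val_one, Matrix.head_cons,
      Matrix.cons_val_two, Matrix.tail_cons] <;>
    rw [mul_inv_eq_one]
  · calc P 0 * ((P 0)⁻¹ * P 1) = P 1 := by group
      _ = (P 0)⁻¹ * (P 0 * P 1) := by group
      _ = (P 0)⁻¹ * (P 1 * P 0) := by rw [rel_ab]
      _ = (P 0)⁻¹ * P 1 * P 0 := by group
  · calc P 2 * ((P 0)⁻¹ * P 1)
        = (P 0)⁻¹ * (P 0 * P 2) * ((P 0)⁻¹ * P 1) := by group
      _ = (P 0)⁻¹ * (P 3 * P 0) * ((P 0)⁻¹ * P 1) := by rw [rel_ac]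
      _ = (P 0)⁻¹ * (P 3 * P 1) := by group
      _ = (P 0)⁻¹ * (P 1 * P 2) := by rw [← rel_bc]
      _ = (P 0)⁻¹ * P 1 * P 2 := by group

noncomputable def φ : PresentedGroup rels₁ →* PresentedGroup rels₂ := PresentedGroup.toGroup hφ
noncomputable def ψ : PresentedGroup rels₂ →* PresentedGroup rels₁ := PresentedGroup.toGroup hψ

lemma φ0 : φ (P 0) = Q 0 := PresentedGroup.toGroup.of hφ
lemma φ1 : φ (P 1) = Q 0 * Q 2 := PresentedGroup.toGroup.of hφ
lemma φ2 : φ (P 2) = Q 1 := PresentedGroup.toGroup.of hφ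
lemma φ3 : φ (P 3) = Q 0 * Q 1 * (Q 0)⁻¹ := PresentedGroup.toGroup.of hφ
lemma ψ0 : ψ (Q 0) = P 0 := PresentedGroup.toGroup.of hψ
lemma ψ1 : ψ (Q 1) = P 2 := PresentedGroup.toGroup.of hψ
lemma ψ2 : ψ (Q 2) = (P 0)⁻¹ * P 1 := PresentedGroup.toGroup.of hψ

/-- ⟨a, b, c, d | ab = ba, ac = da, bc = db⟩ ≅ ⟨a, c, e | ae = ea, ce = ec⟩. -/
theorem wirtinger_presentations_isomorphic :
    Nonempty (PresentedGroup rels₁ ≃* PresentedGroup rels₂) := by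
  refine ⟨MonoidHom.toMulEquiv φ ψ ?_ ?_⟩
  · ext x
    fin_cases x
    · show ψ (φ (P 0)) = P 0
      rw [φ0, ψ0]
    · show ψ (φ (P 1)) = P 1
      rw [φ1, map_mul, ψ0, ψ2]; group
    · show ψ (φ (P 2)) = P 2
      rw [φ2, ψ1]
    · show ψ (φ (P 3)) = P 3
      rw [φ3, map_mul, map_mul, map_inv, ψ0, ψ1]
      have := rel_ac
      calc P 0 * P 2 * (P 0)⁻¹ = P 3 * P 0 * (P 0)⁻¹ := by rw [rel_ac]
        _ = P 3 := by group
  · ext x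
    fin_cases x
    · show φ (ψ (Q 0)) = Q 0
      rw [ψ0, φ0]
    · show φ (ψ (Q 1)) = Q 1
      rw [ψ1, φ2]
    · show φ (ψ (Q 2)) = Q 2
      rw [ψ2, map_mul, map_inv, φ0, φ1]; group

end Stmt4
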